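/- For every integer k ≥ 2 and every positive integer n divisible by 4k, there exists a graph G on n vertices with odd girth at least 2k+1, with minimum degree δ(G) = 3n/(4k), which is not homomorphic to the cycle C_{2k+1} of length 2k+1. (In particular, the minimum degree bound 3n/(4k) in the main theorem cannot be lowered.) -/

import Mathlib

/-!
The graph is the balanced blow-up of the Möbius ladder `M_{4k}`: the cycle on `ZMod (4k)` with
the rungs `x ~ x + 2k`. The blow-up is `3n/(4k)`-regular, and it maps onto `M_{4k}` and contains a
copy of it, so it suffices to treat `M_{4k}` itself.

A closed walk in `M_{4k}` with `a` forward rim steps, `b` backward ones and `c` rungs satisfies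
`4k ∣ a - b + 2kc`; if it is shorter than `2k + 1`, this forces `a = b` and `c` even, so its
length is even.

Under a homomorphism to `C_{2k+1}`, the odd cycle `x, x + 1, …, x + 2k, x` of length `2k + 1`
must wind once around `C_{2k+1}`: its `2k + 1` steps `±1` sum to `0 mod 2k + 1`, so they are all
equal. Comparing these cycles for `x = 0, 1, 2k`, the step along the rim edge `{2k, 2k + 1}`
equals both the step `s` along the rung `{2k, 0}` and `-s`, which is impossible in `ZMod (2k + 1)`.
-/

open SimpleGraph Finset

theorem ZMod.natCast_ne_zero_of_pos_of_lt {a N : ℕ} (ha : 0 < a) (haN : a < N) :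
    (a : ZMod N) ≠ 0 := by
  rw [Ne, ZMod.natCast_eq_zero_iff]
  exact fun h => (Nat.le_of_dvd ha h).not_gt haN

theorem ZMod.natCast_add_self_eq_zero (n : ℕ) : (n : ZMod (2 * n)) + n = 0 := by
  rw [← two_mul]
  exact_mod_cast ZMod.natCast_self (2 * n)

theorem ZMod.forall_eq_one_or_forall_eq_neg_one_of_sum_eq_zero {ι : Type*} [Fintype ι] {N : ℕ}
    (hN : Odd N) (hι : Fintype.card ι = N) {d : ι → ZMod N} (hd : ∀ i, d i = 1 ∨ d i = -1)
    (hsum : ∑ i, d i = 0) : (∀ i, d i = 1) ∨ (∀ i, d i = -1) := by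
  classical
  let s := univ.filter fun i => d i ≠ 1
  have hds : ∀ i, d i = 1 - 2 * if i ∈ s then 1 else 0 := by
    intro i
    by_cases h : d i = 1
    · simp [s, h]
    · rw [if_pos (by simp [s, h]), (hd i).resolve_left h]
      ring
  have hs : N ∣ #s := by
    refine hN.coprime_two_right.dvd_of_dvd_mul_left ?_
    rw [← ZMod.natCast_eq_zero_iff]
    simp_rw [hds, sum_sub_distrib, ← mul_sum, sum_boole] at hsum
    simpa [hι] using hsum
  rcases (#s).eq_zero_or_pos with h0 | hpos
  · left
    intro i
    by_contra h
    have : i ∈ s := mem_filter.2 ⟨mem_univ i, h⟩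
    simp [card_eq_zero.1 h0] at this
  · right
    have hs_univ : s = univ :=
      eq_univ_of_card s (le_antisymm (card_le_univ s) (hι ▸ Nat.le_of_dvd hpos hs))
    intro i
    have : i ∈ s := hs_univ ▸ mem_univ i
    exact (hd i).resolve_left (mem_filter.1 this).2

theorem two_mul_add_one_le_of_dvd_of_odd {k a b c : ℕ}
    (hdvd : (4 * k : ℤ) ∣ a - b + c * (2 * k)) (hodd : Odd (a + b + c)) :
    2 * k + 1 ≤ a + b + c := by
  obtain ⟨t, ht⟩ := hdvd
  obtain ⟨l, hl⟩ := hodd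
  have hab : (a : ℤ) - b = 2 * k * (2 * t - c) := by linear_combination ht
  rcases lt_trichotomy (2 * t - c) 0 with hneg | hzero | hpos
  · have : 2 * k ≤ (b : ℤ) - a := by nlinarith
    omega
  · rw [hzero, mul_zero] at hab
    omega
  · have : 2 * k ≤ (a : ℤ) - b := by nlinarith
    omega

namespace SimpleGraph

theorem circulantGraph_one_sub_eq_of_adj {N : ℕ} {u v : ZMod N}
    (h : (circulantGraph ({1} : Set (ZMod N))).Adj u v) : v - u = 1 ∨ v - u = -1 := by
  rw [circulantGraph_adj, Set.mem_singleton_iff, Set.mem_singleton_iff] at h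
  rcases h.2 with h | h
  · right
    rw [← neg_sub, h]
  · left
    exact h

def cycleGraphHomCirculantGraph (n : ℕ) :
    cycleGraph (n + 1) →g circulantGraph ({1} : Set (ZMod (n + 1))) where
  toFun := ZMod.finEquiv (n + 1)
  map_rel' {u v} h := by
    rw [cycleGraph_eq_circulantGraph, circulantGraph_adj] at h
    simp only [circulantGraph_adj, Set.mem_singleton_iff, ← map_sub,
      (ZMod.finEquiv (n + 1)).injective.eq_iff, map_eq_one_iff _ (ZMod.finEquiv (n + 1)).injective]
    exact h

def blowUp {W : Type*} (H : SimpleGraph W) (ι : Type*) : SimpleGraph (W × ι) :=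
  H.comap Prod.fst

section BlowUp

variable {W ι : Type*} (H : SimpleGraph W)

def blowUpFst : H.blowUp ι →g H :=
  Hom.comap Prod.fst H

def blowUpIncl (i : ι) : H →g H.blowUp ι where
  toFun w := (w, i)
  map_rel' h := h

variable {H} in
theorem IsRegularOfDegree.blowUp [H.LocallyFinite] [Fintype ι]
    [(H.blowUp ι).LocallyFinite] {d : ℕ} (h : H.IsRegularOfDegree d) :
    (H.blowUp ι).IsRegularOfDegree (d * Fintype.card ι) := by
  rintro ⟨w, i⟩
  have hnbr : (H.blowUp ι).neighborFinset (w, i) = H.neighborFinset w ×ˢ univ := by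
    ext ⟨w', j⟩
    rw [mem_neighborFinset, mem_product, mem_neighborFinset]
    simp [SimpleGraph.blowUp]
  rw [← card_neighborFinset_eq_degree, hnbr, card_product, card_neighborFinset_eq_degree,
    h.degree_eq, card_univ]

end BlowUp

/-- The Möbius ladder `M_{2n}`; the paper's `M_{4k}` is `mobiusLadder (2 * k)`. -/
def mobiusLadder (n : ℕ) : SimpleGraph (ZMod (2 * n)) :=
  circulantGraph {1, (n : ZMod (2 * n))}

theorem mobiusLadder_sub_eq_of_adj {n : ℕ} {x y : ZMod (2 * n)} (h : (mobiusLadder n).Adj x y) :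
    y - x = 1 ∨ y - x = -1 ∨ y - x = n := by
  have hn : (n : ZMod (2 * n)) = -n :=
    eq_neg_of_add_eq_zero_left (ZMod.natCast_add_self_eq_zero n)
  simp only [mobiusLadder, circulantGraph_adj, Set.mem_insert_iff, Set.mem_singleton_iff] at h
  rcases h.2 with (h | h) | (h | h)
  · right; left; rw [← neg_sub, h]
  · right; right; rw [← neg_sub, h, ← hn]
  · left; exact h
  · right; right; exact h

theorem mobiusLadder_adj {n : ℕ} (hn : n ≠ 0) {x y : ZMod (2 * n)} :
    (mobiusLadder n).Adj x y ↔ y - x = 1 ∨ y - x = -1 ∨ y - x = n := by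
  refine ⟨mobiusLadder_sub_eq_of_adj, fun h => ?_⟩
  have h1 : (1 : ZMod (2 * n)) ≠ 0 := by
    exact_mod_cast ZMod.natCast_ne_zero_of_pos_of_lt (a := 1) one_pos (by omega)
  have h2 : (n : ZMod (2 * n)) ≠ 0 := ZMod.natCast_ne_zero_of_pos_of_lt (by omega) (by omega)
  simp only [mobiusLadder, circulantGraph_adj, Set.mem_insert_iff, Set.mem_singleton_iff]
  rcases h with h | h | h
  · exact ⟨fun hxy => h1 (by rw [← h, hxy, sub_self]), Or.inr (Or.inl h)⟩
  · refine ⟨fun hxy => h1 (by rw [← neg_neg 1, ← h, hxy, sub_self, neg_zero]),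
      Or.inl (Or.inl ?_)⟩
    rw [← neg_sub, h, neg_neg]
  · exact ⟨fun hxy => h2 (by rw [← h, hxy, sub_self]), Or.inr (Or.inr h)⟩

theorem mobiusLadder_isRegularOfDegree {n : ℕ} (hn : 2 ≤ n) [(mobiusLadder n).LocallyFinite] :
    (mobiusLadder n).IsRegularOfDegree 3 := by
  intro x
  have hnbr : (mobiusLadder n).neighborFinset x = {x + 1, x - 1, x + n} := by
    ext y
    rw [mem_neighborFinset, mobiusLadder_adj (by omega)]
    simp only [mem_insert, mem_singleton, sub_eq_iff_eq_add', ← sub_eq_add_neg]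
  rw [← card_neighborFinset_eq_degree, hnbr, card_insert_of_notMem, card_pair]
  · intro h
    apply ZMod.natCast_ne_zero_of_pos_of_lt (a := n + 1) (N := 2 * n) (by omega) (by omega)
    push_cast
    linear_combination -h
  · simp only [mem_insert, mem_singleton, not_or]
    constructor
    · intro h
      apply ZMod.natCast_ne_zero_of_pos_of_lt (a := 2) (N := 2 * n) (by omega) (by omega)
      push_cast
      linear_combination h
    · intro h
      apply ZMod.natCast_ne_zero_of_pos_of_lt (a := n - 1) (N := 2 * n) (by omega) (by omega)
      push_cast [Nat.cast_sub (by omega : 1 ≤ n)]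
      linear_combination -h

theorem exists_steps_of_mobiusLadder_walk {n : ℕ} {x y : ZMod (2 * n)}
    (w : (mobiusLadder n).Walk x y) :
    ∃ a b c : ℕ, a + b + c = w.length ∧ y - x = a - b + c * n := by
  induction w with
  | nil => exact ⟨0, 0, 0, rfl, by simp⟩
  | @cons x y z hxy w ih =>
    obtain ⟨a, b, c, hlen, hsub⟩ := ih
    have hsplit : z - x = (z - y) + (y - x) := by ring
    rw [Walk.length_cons, ← hlen]
    rcases mobiusLadder_sub_eq_of_adj hxy with h | h | h
    · exact ⟨a + 1, b, c, by ring, by rw [hsplit, hsub, h]; push_cast; ring⟩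
    · exact ⟨a, b + 1, c, by ring, by rw [hsplit, hsub, h]; push_cast; ring⟩
    · exact ⟨a, b, c + 1, by ring, by rw [hsplit, hsub, h]; push_cast; ring⟩

theorem mobiusLadder_two_mul_add_one_le_length {k : ℕ} {x : ZMod (2 * (2 * k))}
    (w : (mobiusLadder (2 * k)).Walk x x) (hodd : Odd w.length) : 2 * k + 1 ≤ w.length := by
  obtain ⟨a, b, c, hlen, hsub⟩ := exists_steps_of_mobiusLadder_walk w
  rw [← hlen] at hodd ⊢
  refine two_mul_add_one_le_of_dvd_of_odd ?_ hodd
  rw [sub_self] at hsub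
  have hzero : ((a - b + c * (2 * k) : ℤ) : ZMod (2 * (2 * k))) = 0 := by
    push_cast at hsub ⊢
    exact hsub.symm
  rw [ZMod.intCast_zmod_eq_zero_iff_dvd] at hzero
  convert hzero using 1
  push_cast
  ring

/-- The odd cycle `x, x + 1, …, x + n, x` winds once around `C_{n + 1}`, so all its steps
agree. -/
theorem mobiusLadder_hom_rim_step_eq_rung_step {n : ℕ} (hn : Even n)
    (φ : mobiusLadder n →g circulantGraph ({1} : Set (ZMod (n + 1))))
    (x : ZMod (2 * n)) {j : ℕ} (hj : j < n) :
    φ (x + j + 1) - φ (x + j) = φ x - φ (x + n) := by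
  let d : Option (Fin n) → ZMod (n + 1) := fun
    | none => φ x - φ (x + n)
    | some i => φ (x + i + 1) - φ (x + i)
  have hd : ∀ i, d i = 1 ∨ d i = -1 := by
    rintro (_ | i) <;> apply circulantGraph_one_sub_eq_of_adj <;> apply φ.map_adj <;>
      rw [mobiusLadder_adj (by omega)]
    · right; right
      linear_combination -ZMod.natCast_add_self_eq_zero n
    · left; ring
  have htelescope : ∑ i ∈ range n, (φ (x + i + 1) - φ (x + i)) = φ (x + n) - φ x := by
    simpa [add_assoc] using sum_range_sub (fun i : ℕ => φ (x + i)) n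
  have hsum : ∑ i, d i = 0 := by
    rw [Fintype.sum_option, Fin.sum_univ_eq_sum_range (fun i => φ (x + i + 1) - φ (x + i)),
      htelescope, sub_add_sub_cancel', sub_self]
  rcases ZMod.forall_eq_one_or_forall_eq_neg_one_of_sum_eq_zero hn.add_one (by simp) hd hsum
    with h | h <;>
    exact (h (some ⟨j, hj⟩)).trans (h none).symm

theorem isEmpty_mobiusLadder_hom_circulantGraph {n : ℕ} (hn : Even n) (hn2 : 2 ≤ n) :
    IsEmpty (mobiusLadder n →g circulantGraph ({1} : Set (ZMod (n + 1)))) := by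
  refine ⟨fun φ => ?_⟩
  have h01 := mobiusLadder_hom_rim_step_eq_rung_step hn φ 0 (j := 1) (by omega)
  have h10 := mobiusLadder_hom_rim_step_eq_rung_step hn φ 1 (j := 0) (by omega)
  have h1n := mobiusLadder_hom_rim_step_eq_rung_step hn φ 1 (j := n - 1) (by omega)
  have hn0 := mobiusLadder_hom_rim_step_eq_rung_step hn φ n (j := 0) (by omega)
  rw [Nat.cast_sub (by omega), Nat.cast_one, add_sub_cancel] at h1n
  rw [Nat.cast_zero, add_zero, ZMod.natCast_add_self_eq_zero] at hn0
  simp only [Nat.cast_zero, Nat.cast_one, zero_add, add_zero] at h01 h10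
  have htwo : (2 : ZMod (n + 1)) * (φ 0 - φ n) = 0 := by
    linear_combination h10 - h01 - h1n + hn0
  have hrung : φ 0 - φ n = 1 ∨ φ 0 - φ n = -1 := by
    apply circulantGraph_one_sub_eq_of_adj
    apply φ.map_adj
    rw [mobiusLadder_adj (by omega)]
    right; right
    linear_combination -ZMod.natCast_add_self_eq_zero n
  apply ZMod.natCast_ne_zero_of_pos_of_lt (a := 2) (N := n + 1) (by omega) (by omega)
  push_cast
  rcases hrung with h | h
  · linear_combination htwo - 2 * h
  · linear_combination -htwo + 2 * h

theorem isEmpty_mobiusLadder_hom_cycleGraph {n : ℕ} (hn : Even n) (hn2 : 2 ≤ n) :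
    IsEmpty (mobiusLadder n →g cycleGraph (n + 1)) :=
  ⟨fun φ => (isEmpty_mobiusLadder_hom_circulantGraph hn hn2).false
    ((cycleGraphHomCirculantGraph n).comp φ)⟩

end SimpleGraph

theorem stmt_15_general (k n : ℕ) (hn : 0 < n) (hdvd : 4 * k ∣ n) :
    ∃ G : SimpleGraph (Fin n),
      (∀ (v : Fin n) (c : G.Walk v v), c.IsCycle → Odd c.length → 2 * k + 1 ≤ c.length) ∧
      4 * k * (@SimpleGraph.minDegree (Fin n) G _ (Classical.decRel _)) = 3 * n ∧
      ¬ Nonempty (G →g SimpleGraph.cycleGraph (2 * k + 1)) := by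
  obtain ⟨m, rfl⟩ := hdvd
  have hk : k ≠ 0 := by rintro rfl; simp at hn
  have hm : 0 < m := Nat.pos_of_mul_pos_left hn
  have : NeZero k := ⟨hk⟩
  have : Nonempty (Fin m) := ⟨⟨0, hm⟩⟩
  let H := (mobiusLadder (2 * k)).blowUp (Fin m)
  have hcard : Fintype.card (ZMod (2 * (2 * k)) × Fin m) = 4 * k * m := by
    simp only [Fintype.card_prod, ZMod.card, Fintype.card_fin]
    ring
  let e := H.overFinIso hcard
  refine ⟨H.overFin hcard, fun v c _ hodd => ?_, ?_, ?_⟩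
  · have := mobiusLadder_two_mul_add_one_le_length
      (c.map ((blowUpFst _).comp e.symm.toHom)) (by rwa [Walk.length_map])
    rwa [Walk.length_map] at this
  · classical
    rw [← e.minDegree_eq,
      ((mobiusLadder_isRegularOfDegree (by omega)).blowUp).minDegree_eq, Fintype.card_fin]
    ring
  · rintro ⟨ψ⟩
    exact (isEmpty_mobiusLadder_hom_cycleGraph (even_two_mul k) (by omega)).false
      (ψ.comp (e.toHom.comp (blowUpIncl _ ⟨0, hm⟩)))

theorem stmt_15 (k n : ℕ) (hk : 2 ≤ k) (hn : 0 < n) (hdvd : 4 * k ∣ n) :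
    ∃ G : SimpleGraph (Fin n),
      (∀ (v : Fin n) (c : G.Walk v v), c.IsCycle → Odd c.length → 2 * k + 1 ≤ c.length) ∧
      4 * k * (@SimpleGraph.minDegree (Fin n) G _ (Classical.decRel _)) = 3 * n ∧
      ¬ Nonempty (G →g SimpleGraph.cycleGraph (2 * k + 1)) :=
  stmt_15_general k n hn hdvd
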